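/- arXiv:1109.3401 — 3 statements merged into one kernel-verified Lean document; each statement's English description precedes it below -/
import Mathlib

section
/- Consider the conservative k-of-n max-throughput LP: maximize F = ∑_T z_T over conservative k-of-n strategies T, subject to ∑_T g(T,i)·z_T ≤ r_i for each i and z_T ≥ 0, where g(T,i) is the probability that test i is performed on a random item under T. Any feasible routing satisfies F ≤ (∑_{i=1}^n r_i(1-p_i)) / α, where α = k·P(Z ≥ k) + ∑_{j=0}^{k-1} j·P(Z = j) and Z = ∑_{i=1}^n (1-x_i). -/
open Finset

noncomputable def wt {n : ℕ} (p : Fin n → ℝ) (x : Fin n → Bool) : ℝ :=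
  ∏ i, if x i then p i else 1 - p i

open scoped Classical in
/-- Probability of an event under the product Bernoulli distribution with parameters `p`. -/
noncomputable def pr {n : ℕ} (p : Fin n → ℝ) (E : (Fin n → Bool) → Prop) : ℝ :=
  ∑ x ∈ Finset.univ.filter E, wt p x

/-- Number of zeros (failed tests) in an outcome vector. -/
def zeros {n : ℕ} (x : Fin n → Bool) : ℕ := ∑ i, if x i then 0 else 1

/-- Binary decision trees over `n` tests. -/
inductive DTree (n : ℕ) : Type
  | leaf (b : Bool) : DTree n
  | node (i : Fin n) (l r : DTree n) : DTree n

def DTree.eval {n : ℕ} : DTree n → (Fin n → Bool) → Bool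
  | .leaf b, _ => b
  | .node i l r, x => if x i then DTree.eval r x else DTree.eval l x

/-- The set of tests performed on item `x` by strategy `T`. -/
def DTree.tests {n : ℕ} : DTree n → (Fin n → Bool) → Finset (Fin n)
  | .leaf _, _ => ∅
  | .node i l r, x => insert i (if x i then DTree.tests r x else DTree.tests l x)

/-- The number of tests (path length) performed on item `x` by strategy `T`. -/
def DTree.depthOn {n : ℕ} : DTree n → (Fin n → Bool) → ℕ
  | .leaf _, _ => 0
  | .node i l r, x => (if x i then DTree.depthOn r x else DTree.depthOn l x) + 1

/-- `gprob p T i` : probability that test `i` is performed on a random item under strategy `T`. -/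
noncomputable def gprob {n : ℕ} (p : Fin n → ℝ) (T : DTree n) (i : Fin n) : ℝ :=
  pr p (fun x => i ∈ T.tests x)

/-- A conservative `k`-of-`n` strategy: tests along each path are distinct, the strategy
computes the `k`-of-`n` function, items with fewer than `k` zeros undergo all `n` tests,
and items with at least `k` zeros are tested exactly until `k` zeros are observed. -/
def Conservative {n : ℕ} (k : ℕ) (T : DTree n) : Prop :=
  (∀ x, T.depthOn x = (T.tests x).card) ∧
  (∀ x : Fin n → Bool, T.eval x = decide (zeros x < k)) ∧
  (∀ x, zeros x < k → T.tests x = Finset.univ) ∧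
  (∀ x, k ≤ zeros x → ((T.tests x).filter (fun i => x i = false)).card = k)

open scoped Classical

lemma wt_nonneg {n : ℕ} (p : Fin n → ℝ) (hp : ∀ i, 0 < p i ∧ p i < 1) (x : Fin n → Bool) :
    0 ≤ wt p x :=
  Finset.prod_nonneg fun i _ => by
    obtain ⟨h1, h2⟩ := hp i; by_cases h : x i <;> simp [h] <;> linarith

lemma pr_nonneg {n : ℕ} (p : Fin n → ℝ) (hp : ∀ i, 0 < p i ∧ p i < 1)
    (E : (Fin n → Bool) → Prop) : 0 ≤ pr p E :=
  Finset.sum_nonneg fun x _ => wt_nonneg p hp x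

lemma tests_update {n : ℕ} (T : DTree n) (i : Fin n) (x : Fin n → Bool) (b : Bool) :
    i ∈ T.tests (Function.update x i b) ↔ i ∈ T.tests x := by
  induction T with
  | leaf c => simp [DTree.tests]
  | node j l r hl hr =>
    by_cases hij : i = j
    · subst hij; simp [DTree.tests]
    · have hxj : Function.update x i b j = x j := Function.update_of_ne (Ne.symm hij) _ _
      simp only [DTree.tests, Finset.mem_insert, hij, false_or, hxj]
      by_cases hj : x j <;> simp [hj, hl, hr]

lemma wt_update {n : ℕ} (p : Fin n → ℝ) (x : Fin n → Bool) (i : Fin n) (b : Bool) :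
    wt p (Function.update x i b)
      = (if b then p i else 1 - p i)
        * ∏ j ∈ Finset.univ \ {i}, (if x j then p j else 1 - p j) := by
  unfold wt
  have h : (fun j => if Function.update x i b j then p j else 1 - p j)
      = Function.update (fun j => if x j then p j else 1 - p j) i (if b then p i else 1 - p i) := by
    funext j
    by_cases hji : j = i
    · subst hji; simp
    · simp [Function.update_of_ne hji]
  calc (∏ j, if Function.update x i b j then p j else 1 - p j)
      = ∏ j, Function.update (fun j => if x j then p j else 1 - p j) i
          (if b then p i else 1 - p i) j := by rw [h]
    _ = _ := Finset.prod_update_of_mem (Finset.mem_univ i) _ _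

/-- The key independence identity. -/
lemma key_indep {n : ℕ} (p : Fin n → ℝ) (i : Fin n) (g : (Fin n → Bool) → Prop)
    (hg : ∀ x b, g (Function.update x i b) ↔ g x) :
    (1 - p i) * ∑ x ∈ Finset.univ.filter g, wt p x
      = ∑ x ∈ Finset.univ.filter (fun x => g x ∧ x i = false), wt p x := by
  have hsplit : (∑ x ∈ Finset.univ.filter g, wt p x)
      = (∑ x ∈ Finset.univ.filter (fun x => g x ∧ x i = false), wt p x)
        + (∑ x ∈ Finset.univ.filter (fun x => g x ∧ x i = true), wt p x) := by
    rw [Finset.sum_filter, Finset.sum_filter, Finset.sum_filter, ← Finset.sum_add_distrib]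
    apply Finset.sum_congr rfl
    intro x _
    by_cases hgx : g x <;> by_cases hxi : x i <;> simp [hgx, hxi]
  have hB : (1 - p i) * (∑ x ∈ Finset.univ.filter (fun x => g x ∧ x i = true), wt p x)
      = p i * (∑ x ∈ Finset.univ.filter (fun x => g x ∧ x i = false), wt p x) := by
    rw [Finset.mul_sum, Finset.mul_sum]
    refine Finset.sum_bij' (fun x _ => Function.update x i false)
      (fun x _ => Function.update x i true) ?_ ?_ ?_ ?_ ?_
    · intro x hx
      simp only [Finset.mem_filter, Finset.mem_univ, true_and] at hx ⊢
      exact ⟨(hg x false).2 hx.1, by simp⟩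
    · intro x hx
      simp only [Finset.mem_filter, Finset.mem_univ, true_and] at hx ⊢
      exact ⟨(hg x true).2 hx.1, by simp⟩
    · intro x hx
      simp only [Finset.mem_filter, Finset.mem_univ, true_and] at hx
      simp only [Function.update_idem]
      rw [← hx.2, Function.update_eq_self]
    · intro x hx
      simp only [Finset.mem_filter, Finset.mem_univ, true_and] at hx
      simp only [Function.update_idem]
      rw [← hx.2, Function.update_eq_self]
    · intro x hx
      simp only [Finset.mem_filter, Finset.mem_univ, true_and] at hx
      have hxx : x = Function.update x i true := by
        conv_lhs => rw [← Function.update_eq_self i x]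
        rw [hx.2]
      conv_lhs => rw [hxx]
      rw [wt_update, wt_update]
      simp
      ring
  rw [hsplit, mul_add, hB]
  ring

lemma zeros_eq_card {n : ℕ} (x : Fin n → Bool) :
    zeros x = (Finset.univ.filter (fun i => x i = false)).card := by
  rw [Finset.card_filter]
  unfold zeros
  apply Finset.sum_congr rfl
  intro i _
  by_cases h : x i <;> simp [h]

/-- Expected number of zeros observed equals E[min(k,Z)] for conservative trees. -/
lemma sum_gprob {n k : ℕ} (p : Fin n → ℝ) (T : DTree n) (hT : Conservative k T) :
    ∑ i, (1 - p i) * gprob p T i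
      = ∑ x : Fin n → Bool, wt p x * ((min k (zeros x) : ℕ) : ℝ) := by
  obtain ⟨-, -, h3, h4⟩ := hT
  have step1 : ∀ i, (1 - p i) * gprob p T i
      = ∑ x ∈ Finset.univ.filter (fun x => i ∈ T.tests x ∧ x i = false), wt p x := by
    intro i
    unfold gprob pr
    have h := key_indep p i (fun x => i ∈ T.tests x) (fun x b => tests_update T i x b)
    convert h using 3
  calc ∑ i, (1 - p i) * gprob p T i
      = ∑ i, ∑ x : Fin n → Bool,
          (if i ∈ T.tests x ∧ x i = false then wt p x else 0) := by
        refine Finset.sum_congr rfl fun i _ => ?_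
        rw [step1 i, Finset.sum_filter]
    _ = ∑ x : Fin n → Bool, ∑ i, (if i ∈ T.tests x ∧ x i = false then wt p x else 0) :=
        Finset.sum_comm
    _ = ∑ x : Fin n → Bool, wt p x * ((min k (zeros x) : ℕ) : ℝ) := by
        refine Finset.sum_congr rfl fun x _ => ?_
        rw [← Finset.sum_filter, Finset.sum_const, nsmul_eq_mul, mul_comm]
        congr 2
        have hcard : (Finset.univ.filter (fun i => i ∈ T.tests x ∧ x i = false))
            = (T.tests x).filter (fun i => x i = false) := by
          ext i; simp [Finset.mem_filter]
        rw [hcard]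
        by_cases h : zeros x < k
        · rw [h3 x h, ← zeros_eq_card, min_eq_right (le_of_lt h)]
        · rw [h4 x (le_of_not_gt h), min_eq_left (le_of_not_gt h)]

lemma alpha_eq {n : ℕ} (k : ℕ) (p : Fin n → ℝ) :
    ((k : ℝ) * pr p (fun x => k ≤ zeros x)
        + ∑ j ∈ Finset.range k, (j : ℝ) * pr p (fun x => zeros x = j))
      = ∑ x : Fin n → Bool, wt p x * ((min k (zeros x) : ℕ) : ℝ) := by
  simp only [pr, Finset.sum_filter, Finset.mul_sum]
  rw [Finset.sum_comm (s := Finset.range k), ← Finset.sum_add_distrib]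
  refine Finset.sum_congr rfl fun x _ => ?_
  by_cases h : k ≤ zeros x
  · rw [if_pos h, min_eq_left h]
    rw [Finset.sum_eq_zero (fun j hj => by
      rw [if_neg (by simp only [Finset.mem_range] at hj; omega)]
      ring)]
    ring
  · rw [if_neg h, min_eq_right (by omega)]
    rw [Finset.sum_eq_single_of_mem (zeros x)
      (by simp only [Finset.mem_range]; omega)
      (fun j _ hj => by rw [if_neg (fun hh => hj hh.symm)]; ring)]
    rw [if_pos rfl]
    ring

lemma alpha_pos {n k : ℕ} (hk1 : 1 ≤ k) (hkn : k ≤ n) (p : Fin n → ℝ)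
    (hp : ∀ i, 0 < p i ∧ p i < 1) :
    0 < (k : ℝ) * pr p (fun x => k ≤ zeros x)
        + ∑ j ∈ Finset.range k, (j : ℝ) * pr p (fun x => zeros x = j) := by
  have h1 : 0 < pr p (fun x => k ≤ zeros x) := by
    unfold pr
    have hwt : 0 < wt p (fun _ : Fin n => false) :=
      Finset.prod_pos fun i _ => by simpa using (by linarith [(hp i).2] : (0:ℝ) < 1 - p i)
    refine Finset.sum_pos' (fun x _ => wt_nonneg p hp x) ⟨(fun _ => false), ?_, hwt⟩
    simp only [Finset.mem_filter, Finset.mem_univ, true_and]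
    have : zeros (fun _ : Fin n => false) = n := by simp [zeros]
    omega
  have h2 : 0 ≤ ∑ j ∈ Finset.range k, (j : ℝ) * pr p (fun x => zeros x = j) :=
    Finset.sum_nonneg fun j _ =>
      mul_nonneg (Nat.cast_nonneg j) (pr_nonneg p hp _)
  have hk : (1 : ℝ) ≤ (k : ℝ) := by exact_mod_cast hk1
  nlinarith

/-- Any feasible routing for the conservative k-of-n max-throughput LP has throughput
at most `(∑ᵢ rᵢ(1-pᵢ)) / α` where `α = k·P(Z ≥ k) + ∑_{j<k} j·P(Z = j)`. -/
theorem stmt_4 (n k : ℕ) (hk1 : 1 ≤ k) (hkn : k ≤ n)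
    (p r : Fin n → ℝ) (hp : ∀ i, 0 < p i ∧ p i < 1) (hr : ∀ i, 0 < r i)
    (S : Finset (DTree n)) (z : DTree n → ℝ)
    (hcons : ∀ T ∈ S, Conservative k T) (hz : ∀ T, 0 ≤ z T)
    (hfeas : ∀ i, ∑ T ∈ S, gprob p T i * z T ≤ r i) :
    ∑ T ∈ S, z T ≤ (∑ i, r i * (1 - p i)) /
      ((k : ℝ) * pr p (fun x => k ≤ zeros x)
        + ∑ j ∈ Finset.range k, (j : ℝ) * pr p (fun x => zeros x = j)) := by
  rw [le_div_iff₀ (alpha_pos hk1 hkn p hp)]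
  have hβ : ∀ T ∈ S, ((k : ℝ) * pr p (fun x => k ≤ zeros x)
      + ∑ j ∈ Finset.range k, (j : ℝ) * pr p (fun x => zeros x = j))
      = ∑ i, (1 - p i) * gprob p T i := fun T hT => by
    rw [alpha_eq k p, ← sum_gprob p T (hcons T hT)]
  calc (∑ T ∈ S, z T) * ((k : ℝ) * pr p (fun x => k ≤ zeros x)
      + ∑ j ∈ Finset.range k, (j : ℝ) * pr p (fun x => zeros x = j))
      = ∑ T ∈ S, z T * ∑ i, (1 - p i) * gprob p T i := by
        rw [Finset.sum_mul]
        exact Finset.sum_congr rfl fun T hT => by rw [← hβ T hT]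
    _ = ∑ T ∈ S, ∑ i, (1 - p i) * (gprob p T i * z T) := by
        refine Finset.sum_congr rfl fun T _ => ?_
        rw [Finset.mul_sum]
        exact Finset.sum_congr rfl fun i _ => by ring
    _ = ∑ i, (1 - p i) * ∑ T ∈ S, gprob p T i * z T := by
        rw [Finset.sum_comm]
        exact Finset.sum_congr rfl fun i _ => by rw [Finset.mul_sum]
    _ ≤ ∑ i, (1 - p i) * r i := by
        refine Finset.sum_le_sum fun i _ => ?_
        have h1 : (0:ℝ) ≤ 1 - p i := by linarith [(hp i).2]
        exact mul_le_mul_of_nonneg_left (hfeas i) h1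
    _ = ∑ i, r i * (1 - p i) := Finset.sum_congr rfl fun i _ => mul_comm _ _
end

section
/- Consider a sequence of n-1 merges of disjoint sets (megaprocessors), starting from n singletons, where the i-th merge combines two current sets A_i, B_i into A_i ∪ B_i. Charge to each element of the smaller of A_i, B_i the amount min(v+1, min(|A_i|,|B_i|)+1)/min(|A_i|,|B_i|) at merge i (for a fixed parameter v ≥ 0). Then the total charge accumulated by any single element over all merges is O(1), i.e., bounded by an absolute constant (at most 10). -/
/-!
An element is charged only when it lies in the smaller of the two merged sets, so the set
containing it at least doubles at every charge, and after its first charge that set has at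
least `max v 2` elements. The first charge is `min (v+1) (s+1) / s ≤ (s+1)/s ≤ 2`; each later
one is at most `(v+1)/s` with `s` at least doubling, so they sum to at most
`2(v+1)/max v 2 ≤ 3`.
-/

open Finset

noncomputable def mergeCharge (v s : ℕ) : ℝ := min ((v : ℝ) + 1) ((s : ℝ) + 1) / s

lemma mergeCharge_le_two {v s : ℕ} (hs : 0 < s) : mergeCharge v s ≤ 2 := by
  have hs' : (1 : ℝ) ≤ s := by exact_mod_cast hs
  rw [mergeCharge, div_le_iff₀ (by positivity)]
  linarith [min_le_right ((v : ℝ) + 1) ((s : ℝ) + 1)]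

lemma mergeCharge_le (v s : ℕ) : mergeCharge v s ≤ ((v : ℝ) + 1) / s :=
  div_le_div_of_nonneg_right (min_le_left _ _) (Nat.cast_nonneg s)

/-- `2 w / s k` is a potential: at a charged step `s` at least doubles, so the drop
`2 w / s k - 2 w / s (k + 1) ≥ w / s k` pays for the charge. -/
lemma sum_Ico_ite_div_add_le {s : ℕ → ℝ} {p : ℕ → Prop} [DecidablePred p] {w : ℝ} {j n : ℕ}
    (hw : 0 ≤ w) (hpos : ∀ i, 0 < s i) (hmono : ∀ i < n, s i ≤ s (i + 1))
    (hdouble : ∀ i < n, p i → 2 * s i ≤ s (i + 1)) (k : ℕ) (hjk : j ≤ k) (hkn : k ≤ n) :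
    ∑ i ∈ Ico j k, (if p i then w / s i else 0) + 2 * w / s k ≤ 2 * w / s j := by
  induction k, hjk using Nat.le_induction with
  | base => simp
  | succ k hjk ih =>
    have ih := ih (by omega)
    have hk := hpos k
    rw [sum_Ico_succ_top hjk]
    split_ifs with hp
    · have hnext : 2 * w / s (k + 1) ≤ w / s k := by
        calc 2 * w / s (k + 1) ≤ 2 * w / (2 * s k) :=
              div_le_div_of_nonneg_left (by positivity) (by positivity) (hdouble k hkn hp)
          _ = w / s k := mul_div_mul_left w (s k) two_ne_zero
      have : 2 * w / s k = w / s k + w / s k := by ring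
      linarith
    · have : 2 * w / s (k + 1) ≤ 2 * w / s k :=
        div_le_div_of_nonneg_left (by positivity) hk (hmono k hkn)
      linarith

lemma sum_ite_mergeCharge_le {s : ℕ → ℕ} {p : ℕ → Prop} [DecidablePred p] {v m : ℕ}
    (hpos : ∀ i, 0 < s i) (hmono : ∀ i < m, s i ≤ s (i + 1))
    (hcharged : ∀ i < m, p i → 2 * s i ≤ s (i + 1) ∧ v ≤ s (i + 1)) :
    ∑ i ∈ range m, (if p i then mergeCharge v (s i) else 0) ≤ 5 := by
  by_cases hany : ∃ j, j < m ∧ p j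
  swap
  · simp only [not_exists, not_and] at hany
    rw [sum_eq_zero fun i hi => if_neg (hany i (mem_range.mp hi))]
    norm_num
  obtain ⟨hjm, hj⟩ := Nat.find_spec hany
  set j := Nat.find hany
  have hbefore : ∑ i ∈ range j, (if p i then mergeCharge v (s i) else 0) = 0 :=
    sum_eq_zero fun i hi =>
      have hij := mem_range.mp hi
      if_neg fun hp => Nat.find_min hany hij ⟨hij.trans hjm, hp⟩
  have hfirst := mergeCharge_le_two (v := v) (hpos j)
  obtain ⟨hdouble, hv⟩ := hcharged j hjm hj
  have hs : (2 : ℝ) ≤ s (j + 1) := by exact_mod_cast (show 2 ≤ s (j + 1) by linarith [hpos j])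
  have hv' : (v : ℝ) ≤ s (j + 1) := by exact_mod_cast hv
  have hlater : ∑ i ∈ Ico (j + 1) m, (if p i then mergeCharge v (s i) else 0) ≤ 3 := by
    have hpot := sum_Ico_ite_div_add_le (s := fun i => (s i : ℝ)) (p := p) (w := (v : ℝ) + 1)
      (by positivity) (fun i => by exact_mod_cast hpos i)
      (fun i hi => by exact_mod_cast hmono i hi)
      (fun i hi hp => by exact_mod_cast (hcharged i hi hp).1) m hjm le_rfl
    have hlast : 0 ≤ 2 * ((v : ℝ) + 1) / s m := by positivity
    calc ∑ i ∈ Ico (j + 1) m, (if p i then mergeCharge v (s i) else 0)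
        ≤ ∑ i ∈ Ico (j + 1) m, (if p i then ((v : ℝ) + 1) / s i else 0) := by
          gcongr with i; split_ifs
          · exact mergeCharge_le v (s i)
          · exact le_rfl
      _ ≤ 2 * ((v : ℝ) + 1) / s (j + 1) := by linarith
      _ ≤ 3 := by rw [div_le_iff₀ (by linarith)]; linarith
  rw [← sum_range_add_sum_Ico _ hjm.le, sum_eq_sum_Ico_succ_bot hjm, if_pos hj, hbefore]
  linarith

lemma card_ite_le_eq_min {α : Type*} (A B : Finset α) :
    (if A.card ≤ B.card then A else B).card = min A.card B.card := by
  split_ifs with h <;> omega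

lemma card_le_card_ite_union {α : Type*} [DecidableEq α] (X A B : Finset α) :
    X.card ≤ (if X = A ∨ X = B then A ∪ B else X).card := by
  split_ifs with h
  · rcases h with rfl | rfl
    exacts [card_le_card subset_union_left, card_le_card subset_union_right]
  · exact le_rfl

theorem stmt_10_general {α : Type*} [DecidableEq α] (m v : ℕ)
    (comp : ℕ → α → Finset α) (A B : ℕ → Finset α)
    (hself : ∀ i a, a ∈ comp i a)
    (hdisj : ∀ i < m, Disjoint (A i) (B i))
    (hstep : ∀ i < m, ∀ a, comp (i + 1) a =
      if comp i a = A i ∨ comp i a = B i then A i ∪ B i else comp i a)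
    (a : α) :
    ∑ i ∈ Finset.range m,
        (if comp i a = (if (A i).card ≤ (B i).card then A i else B i)
            ∧ v ≤ (A i).card + (B i).card
          then (min (v + 1) (min (A i).card (B i).card + 1) : ℝ) /
            (min (A i).card (B i).card : ℝ)
          else 0)
      ≤ 10 := by
  have hcharged : ∀ i < m, comp i a = (if (A i).card ≤ (B i).card then A i else B i) →
      2 * (comp i a).card ≤ (comp (i + 1) a).card ∧
        (comp (i + 1) a).card = (A i).card + (B i).card := by
    intro i hi hsmall
    have hmerged : comp (i + 1) a = A i ∪ B i := by
      rw [hstep i hi a, if_pos (hsmall ▸ ite_eq_or_eq _ _ _)]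
    rw [hmerged, card_union_of_disjoint (hdisj i hi), hsmall, card_ite_le_eq_min]
    omega
  calc _ = ∑ i ∈ range m, (if comp i a = (if (A i).card ≤ (B i).card then A i else B i)
            ∧ v ≤ (A i).card + (B i).card then mergeCharge v (comp i a).card else 0) := by
        refine sum_congr rfl fun i _ => ite_congr rfl (fun h => ?_) fun _ => rfl
        rw [h.1, card_ite_le_eq_min, mergeCharge, Nat.cast_min]
    _ ≤ 5 := sum_ite_mergeCharge_le (fun i => card_pos.mpr ⟨a, hself i a⟩)
        (fun i hi => hstep i hi a ▸ card_le_card_ite_union _ _ _)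
        (fun i hi h => ⟨(hcharged i hi h.1).1, (hcharged i hi h.1).2 ▸ h.2⟩)
    _ ≤ 10 := by norm_num

/-- The charging argument of Lemma 4: in a sequence of `m` merges of disjoint sets starting
from singletons (`comp i a` is the set currently containing `a` before merge `i`; merge `i`
combines the current sets `A i` and `B i`), charging each element of the smaller merged set
the amount `min(v+1, s+1)/s` (where `s = min(|Aᵢ|,|Bᵢ|)`, and charges occur only when the
convolution for `v` has nonzero cost, i.e. `v ≤ |Aᵢ| + |Bᵢ|`), the total charge accumulated
by any single element is bounded by the absolute constant `10`. -/
theorem stmt_10 {α : Type*} [DecidableEq α] (m v : ℕ)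
    (comp : ℕ → α → Finset α) (A B : ℕ → Finset α)
    (hself : ∀ i a, a ∈ comp i a)
    (h0 : ∀ a, comp 0 a = {a})
    (hA : ∀ i < m, ∃ a, comp i a = A i)
    (hB : ∀ i < m, ∃ a, comp i a = B i)
    (hdisj : ∀ i < m, Disjoint (A i) (B i))
    (hstep : ∀ i < m, ∀ a, comp (i + 1) a =
      if comp i a = A i ∨ comp i a = B i then A i ∪ B i else comp i a)
    (a : α) :
    ∑ i ∈ Finset.range m,
        (if comp i a = (if (A i).card ≤ (B i).card then A i else B i)
            ∧ v ≤ (A i).card + (B i).card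
          then (min (v + 1) (min (A i).card (B i).card + 1) : ℝ) /
            (min (A i).card (B i).card : ℝ)
          else 0)
      ≤ 10 :=
  stmt_10_general m v comp A B hself hdisj hstep a
end

section
/- For the min-cost 1-of-n testing problem with independent pass probabilities p_i ∈ (0,1) and costs c_i > 0, the permutation ordering tests in increasing order of c_i/(1-p_i) minimizes the expected cost ∑_{j=1}^n c_{π(j)}·∏_{ℓ<j} p_{π(ℓ)} over all permutations π. -/
/-!
Writing the expected cost of a testing order recursively, `C(a :: t) = c a + p a * C t`, swapping
two adjacent tests `a, b` changes the cost by `p_*·(c b (1 - p a) - c a (1 - p b))`, where `p_*`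
is the pass probability of the prefix, so putting first the test with the smaller ratio
`c/(1 - p)` never hurts. Moving a test of minimal ratio to the front by such swaps and recursing
on the rest (selection sort) shows that the sorted order is optimal.
-/

open Finset

section ExpectedCost

variable {α : Type*} (p c : α → ℝ)

noncomputable def expectedCost : List α → ℝ
  | [] => 0
  | a :: t => c a + p a * expectedCost t

variable {p c}

theorem expectedCost_cons_le_cons {a : α} {l l' : List α} (hpa : 0 ≤ p a)
    (h : expectedCost p c l ≤ expectedCost p c l') :
    expectedCost p c (a :: l) ≤ expectedCost p c (a :: l') := by
  simp only [expectedCost]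
  gcongr

theorem expectedCost_swap_le {a b : α} (t : List α) (hpa : p a < 1) (hpb : p b < 1)
    (hratio : c b / (1 - p b) ≤ c a / (1 - p a)) :
    expectedCost p c (b :: a :: t) ≤ expectedCost p c (a :: b :: t) := by
  have hcross := (div_le_div_iff₀ (sub_pos.mpr hpb) (sub_pos.mpr hpa)).mp hratio
  simp only [expectedCost]
  nlinarith

theorem expectedCost_cons_erase_le [DecidableEq α] (hp0 : ∀ x, 0 ≤ p x) (hp1 : ∀ x, p x < 1) {b : α}
    {l : List α} (hb : b ∈ l) (hmin : ∀ x ∈ l, c b / (1 - p b) ≤ c x / (1 - p x)) :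
    expectedCost p c (b :: l.erase b) ≤ expectedCost p c l := by
  induction l with
  | nil => simp at hb
  | cons a t ih =>
    by_cases hab : a = b
    · subst hab
      simp
    have hbt : b ∈ t := (List.mem_cons.mp hb).resolve_left (Ne.symm hab)
    rw [List.erase_cons_tail (by simpa using hab)]
    calc expectedCost p c (b :: a :: t.erase b)
        ≤ expectedCost p c (a :: b :: t.erase b) :=
          expectedCost_swap_le _ (hp1 a) (hp1 b) (hmin a List.mem_cons_self)
      _ ≤ expectedCost p c (a :: t) :=
          expectedCost_cons_le_cons (hp0 a)
            (ih hbt fun x hx => hmin x (List.mem_cons_of_mem _ hx))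

theorem expectedCost_le_of_pairwise_of_perm (hp0 : ∀ x, 0 ≤ p x) (hp1 : ∀ x, p x < 1)
    {l l' : List α} (hsorted : l.Pairwise fun x y => c x / (1 - p x) ≤ c y / (1 - p y))
    (hperm : l.Perm l') :
    expectedCost p c l ≤ expectedCost p c l' := by
  classical
  induction l generalizing l' with
  | nil => rw [hperm.nil_eq]
  | cons b t ih =>
    obtain ⟨hbt, ht⟩ := List.pairwise_cons.mp hsorted
    have hb : b ∈ l' := hperm.mem_iff.mp List.mem_cons_self
    have hmin : ∀ x ∈ l', c b / (1 - p b) ≤ c x / (1 - p x) := by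
      intro x hx
      rcases List.mem_cons.mp (hperm.symm.mem_iff.mp hx) with rfl | hxt
      · exact le_rfl
      · exact hbt x hxt
    have hperm' : t.Perm (l'.erase b) := (hperm.trans (List.perm_cons_erase hb)).cons_inv
    calc expectedCost p c (b :: t)
        ≤ expectedCost p c (b :: l'.erase b) := expectedCost_cons_le_cons (hp0 b) (ih ht hperm')
      _ ≤ expectedCost p c l' := expectedCost_cons_erase_le hp0 hp1 hb hmin

theorem sum_mul_prod_filter_lt_eq_expectedCost {k : ℕ} (f : Fin k → α) :
    ∑ j : Fin k, c (f j) * ∏ ℓ ∈ univ.filter (fun ℓ => ℓ < j), p (f ℓ)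
      = expectedCost p c (List.ofFn f) := by
  induction k with
  | zero => simp [expectedCost]
  | succ m ih =>
    rw [Fin.sum_univ_succ, List.ofFn_succ, expectedCost, ← ih, mul_sum]
    congr 1
    · simp
    · refine sum_congr rfl fun i _ => ?_
      rw [prod_filter, prod_filter, Fin.prod_univ_succ]
      simp only [Fin.succ_lt_succ_iff, Fin.succ_pos, if_true]
      ring

end ExpectedCost

theorem stmt_12_general (n : ℕ) (p c : Fin n → ℝ)
    (hp : ∀ i, 0 < p i ∧ p i < 1)
    (π : Equiv.Perm (Fin n))
    (hsort : ∀ i j : Fin n, i ≤ j →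
      c (π i) / (1 - p (π i)) ≤ c (π j) / (1 - p (π j))) :
    ∀ σ : Equiv.Perm (Fin n),
      ∑ j : Fin n, c (π j) * ∏ ℓ ∈ Finset.univ.filter (fun ℓ => ℓ < j), p (π ℓ)
        ≤ ∑ j : Fin n, c (σ j) * ∏ ℓ ∈ Finset.univ.filter (fun ℓ => ℓ < j), p (σ ℓ) := by
  intro σ
  rw [sum_mul_prod_filter_lt_eq_expectedCost, sum_mul_prod_filter_lt_eq_expectedCost]
  have hsorted : (List.ofFn π).Pairwise fun x y => c x / (1 - p x) ≤ c y / (1 - p y) :=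
    List.pairwise_ofFn.mpr fun i j hij => hsort i j hij.le
  have hperm : (List.ofFn π).Perm (List.ofFn σ) :=
    (π.ofFn_comp_perm id).trans (σ.ofFn_comp_perm id).symm
  exact expectedCost_le_of_pairwise_of_perm (fun i => (hp i).1.le) (fun i => (hp i).2)
    hsorted hperm

/-- Ratio rule for min-cost 1-of-n testing: ordering tests by nondecreasing `cᵢ/(1-pᵢ)`
minimizes the expected cost `∑ⱼ c_{π(j)} ∏_{ℓ<j} p_{π(ℓ)}` over all permutations. -/
theorem stmt_12 (n : ℕ) (p c : Fin n → ℝ)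
    (hp : ∀ i, 0 < p i ∧ p i < 1) (hc : ∀ i, 0 < c i)
    (π : Equiv.Perm (Fin n))
    (hsort : ∀ i j : Fin n, i ≤ j →
      c (π i) / (1 - p (π i)) ≤ c (π j) / (1 - p (π j))) :
    ∀ σ : Equiv.Perm (Fin n),
      ∑ j : Fin n, c (π j) * ∏ ℓ ∈ Finset.univ.filter (fun ℓ => ℓ < j), p (π ℓ)
        ≤ ∑ j : Fin n, c (σ j) * ∏ ℓ ∈ Finset.univ.filter (fun ℓ => ℓ < j), p (σ ℓ) :=
  stmt_12_general n p c hp π hsort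
end
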